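/- (Wasserstein stability bound) Let T be a fixed target dataset. Assume: (A1) for every dataset D, the empirical risk L_D(θ) is μ-strongly convex in θ; (A2) z ↦ ∇_θℓ(θ;z) is G-Lipschitz; (A3) L_T is K-Lipschitz in θ. Then for any two datasets D, D' with ERMs θ_D, θ_{D'}, we have |L_T(θ_D) − L_T(θ_{D'})| ≤ (K·G/μ) · W₁(P̂_D, P̂_{D'}). -/

import Mathlib

open MeasureTheory
open scoped ENNReal RealInnerProductSpace BigOperators

noncomputable def W1 {X : Type*} [MeasurableSpace X] [PseudoMetricSpace X]
    (μ ν : Measure X) : ℝ :=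
  (⨅ π ∈ {π : Measure (X × X) | π.map Prod.fst = μ ∧ π.map Prod.snd = ν},
    ∫⁻ p, ENNReal.ofReal (dist p.1 p.2) ∂π).toReal

noncomputable def empFinset {X : Type*} [MeasurableSpace X] (D : Finset X) : Measure X :=
  (D.card : ℝ≥0∞)⁻¹ • ∑ z ∈ D, Measure.dirac z

noncomputable def empTuple {X : Type*} [MeasurableSpace X] {B : ℕ} (s : Fin B → X) : Measure X :=
  (B : ℝ≥0∞)⁻¹ • ∑ i, Measure.dirac (s i)

/-!
At a minimiser the gradient of the empirical risk vanishes, so μ-strong convexity of `L_{D'}`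
gives `μ ‖θ_D - θ_{D'}‖ ≤ ‖∇L_{D'}(θ_D)‖ = ‖∇L_{D'}(θ_D) - ∇L_D(θ_D)‖`. This is the difference
of the means of the `G`-Lipschitz map `z ↦ ∇ℓ(θ_D; z)` under the two empirical measures, and
integrating along any coupling bounds it by `G` times the transport cost of that coupling
(the easy half of Kantorovich–Rubinstein duality). The `K`-Lipschitz bound on `L_T` finishes.
-/

open scoped NNReal

section Coupling

variable {X : Type*} [MeasurableSpace X]

def couplings (μ ν : Measure X) : Set (Measure (X × X)) :=
  {π | π.map Prod.fst = μ ∧ π.map Prod.snd = ν}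

theorem prod_mem_couplings (μ ν : Measure X) [IsProbabilityMeasure μ] [IsProbabilityMeasure ν] :
    μ.prod ν ∈ couplings μ ν := by
  simp [couplings]

variable [PseudoMetricSpace X]

noncomputable def transportCost (π : Measure (X × X)) : ℝ≥0∞ :=
  ∫⁻ p, ENNReal.ofReal (dist p.1 p.2) ∂π

theorem W1_eq_toReal_iInf_transportCost (μ ν : Measure X) :
    W1 μ ν = (⨅ π ∈ couplings μ ν, transportCost π).toReal :=
  rfl

variable {E : Type*} [NormedAddCommGroup E] [NormedSpace ℝ E]
  {μ ν : Measure X} {f : X → E} {G : ℝ≥0}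

theorem enorm_integral_sub_le_of_mem_couplings {π : Measure (X × X)} (hπ : π ∈ couplings μ ν)
    (hf : LipschitzWith G f) (hfμ : Integrable f μ) (hfν : Integrable f ν) :
    ‖∫ x, f x ∂ν - ∫ x, f x ∂μ‖ₑ ≤ G * transportCost π := by
  obtain ⟨rfl, rfl⟩ := hπ
  have h₁ : Integrable (fun p => f p.1) π := hfμ.comp_aemeasurable measurable_fst.aemeasurable
  have h₂ : Integrable (fun p => f p.2) π := hfν.comp_aemeasurable measurable_snd.aemeasurable
  rw [integral_map measurable_fst.aemeasurable hfμ.aestronglyMeasurable,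
    integral_map measurable_snd.aemeasurable hfν.aestronglyMeasurable,
    ← integral_sub h₂ h₁, transportCost, ← lintegral_const_mul' _ _ ENNReal.coe_ne_top]
  refine (enorm_integral_le_lintegral_enorm _).trans (lintegral_mono fun p => ?_)
  rw [← edist_dist, ← edist_eq_enorm_sub, edist_comm p.1]
  exact hf p.2 p.1

theorem enorm_integral_sub_le_mul_iInf_transportCost (hC : (couplings μ ν).Nonempty)
    (hf : LipschitzWith G f) (hfμ : Integrable f μ) (hfν : Integrable f ν) :
    ‖∫ x, f x ∂ν - ∫ x, f x ∂μ‖ₑ ≤ G * ⨅ π ∈ couplings μ ν, transportCost π := by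
  have := hC.to_subtype
  rw [iInf_subtype', ENNReal.mul_iInf (by simp)]
  exact le_iInf fun π => enorm_integral_sub_le_of_mem_couplings π.2 hf hfμ hfν

-- `W1` is the `toReal` of this infimum, hence `0` when the infimum is infinite.
theorem norm_integral_sub_le_mul_W1 (hW : ⨅ π ∈ couplings μ ν, transportCost π ≠ ⊤)
    (hf : LipschitzWith G f) (hfμ : Integrable f μ) (hfν : Integrable f ν) :
    ‖∫ x, f x ∂ν - ∫ x, f x ∂μ‖ ≤ G * W1 μ ν := by
  have hC : (couplings μ ν).Nonempty := by
    by_contra h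
    simp [Set.not_nonempty_iff_eq_empty.1 h] at hW
  have h := ENNReal.toReal_mono (ENNReal.mul_ne_top ENNReal.coe_ne_top hW)
    (enorm_integral_sub_le_mul_iInf_transportCost hC hf hfμ hfν)
  simpa [W1_eq_toReal_iInf_transportCost] using h

theorem iInf_transportCost_ne_top [IsProbabilityMeasure μ] [IsProbabilityMeasure ν] (x₀ : X)
    (hμ : Integrable (fun x => dist x x₀) μ) (hν : Integrable (fun x => dist x x₀) ν) :
    ⨅ π ∈ couplings μ ν, transportCost π ≠ ⊤ := by
  refine ne_top_of_le_ne_top (ne_of_lt ?_) (biInf_le _ (prod_mem_couplings μ ν))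
  calc transportCost (μ.prod ν)
      ≤ ∫⁻ p, ENNReal.ofReal (dist p.1 x₀ + dist p.2 x₀) ∂μ.prod ν :=
        lintegral_mono fun p => ENNReal.ofReal_le_ofReal (dist_triangle_right _ _ _)
    _ < ⊤ := ((hμ.comp_fst ν).add (hν.comp_snd μ)).lintegral_lt_top

end Coupling

section Empirical

variable {X : Type*} [MeasurableSpace X] {E : Type*} [NormedAddCommGroup E]

theorem isProbabilityMeasure_empFinset {D : Finset X} (hD : D.Nonempty) :
    IsProbabilityMeasure (empFinset D) := by
  constructor
  simp [empFinset, ENNReal.inv_mul_cancel, hD.ne_empty]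

variable [MeasurableSingletonClass X]

theorem integrable_empFinset (D : Finset X) (f : X → E) : Integrable f (empFinset D) := by
  rcases D.eq_empty_or_nonempty with rfl | hD
  · simp [empFinset]
  · exact (integrable_finsetSum_measure.2 fun z _ => integrable_dirac enorm_lt_top).smul_measure
      (by simp [hD.ne_empty])

theorem integral_empFinset [NormedSpace ℝ E] [CompleteSpace E] (D : Finset X) (f : X → E) :
    ∫ x, f x ∂empFinset D = (D.card : ℝ)⁻¹ • ∑ z ∈ D, f z := by
  rw [empFinset, integral_smul_measure,
    integral_finsetSum_measure fun z _ => integrable_dirac enorm_lt_top]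
  simp [integral_dirac]

theorem norm_integral_sub_le_mul_W1_empFinset [PseudoMetricSpace X] [NormedSpace ℝ E]
    {D D' : Finset X} (hD : D.Nonempty) (hD' : D'.Nonempty) {f : X → E} {G : ℝ≥0}
    (hf : LipschitzWith G f) :
    ‖∫ x, f x ∂empFinset D' - ∫ x, f x ∂empFinset D‖ ≤ G * W1 (empFinset D) (empFinset D') := by
  have := isProbabilityMeasure_empFinset hD
  have := isProbabilityMeasure_empFinset hD'
  obtain ⟨x₀, -⟩ := hD
  exact norm_integral_sub_le_mul_W1
    (iInf_transportCost_ne_top x₀ (integrable_empFinset _ _) (integrable_empFinset _ _)) hf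
    (integrable_empFinset _ _) (integrable_empFinset _ _)

end Empirical

section Optimization

variable {F : Type*} [NormedAddCommGroup F] [InnerProductSpace ℝ F]

theorem IsLocalMin.hasGradientAt_eq_zero [CompleteSpace F] {f : F → ℝ} {f' x : F}
    (h : IsLocalMin f x) (hf : HasGradientAt f f' x) : f' = 0 := by
  simpa using h.hasFDerivAt_eq_zero (hasGradientAt_iff_hasFDerivAt.1 hf)

theorem mul_norm_sub_le_norm_gradient_of_strongConvex {f : F → ℝ} {f' : F → F} {μ : ℝ}
    (hf : ∀ x y, f x + ⟪f' x, y - x⟫ + μ / 2 * ‖y - x‖ ^ 2 ≤ f y) {x₀ : F} (hx₀ : f' x₀ = 0)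
    (x : F) : μ * ‖x - x₀‖ ≤ ‖f' x‖ := by
  have h₁ := hf x₀ x
  have h₂ := hf x x₀
  rw [hx₀, inner_zero_left] at h₁
  rw [norm_sub_rev] at h₂
  have hcs : -(‖f' x‖ * ‖x - x₀‖) ≤ ⟪f' x, x₀ - x⟫ := by
    rw [← norm_sub_rev x₀]
    exact neg_le_of_abs_le (abs_real_inner_le_norm _ _)
  rcases (norm_nonneg (x - x₀)).eq_or_lt with hr | hr
  · simp [← hr]
  · exact le_of_mul_le_mul_right (by nlinarith) hr

end Optimization

/-- Wasserstein stability bound: under strong convexity of empirical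
risks, data-Lipschitz gradients, and Lipschitz target loss, the test losses of the
ERMs on two datasets differ by at most (K G / μ) W₁. -/
theorem stmt3 {d p : ℕ}
    (ℓ : EuclideanSpace ℝ (Fin p) → EuclideanSpace ℝ (Fin d) → ℝ)
    (g : EuclideanSpace ℝ (Fin p) → EuclideanSpace ℝ (Fin d) → EuclideanSpace ℝ (Fin p))
    (LT : EuclideanSpace ℝ (Fin p) → ℝ)
    (μ G K : ℝ) (hμ : 0 < μ) (hG : 0 ≤ G) (hK : 0 ≤ K)
    -- g θ z is the gradient of ℓ(·; z) at θ, so the average of g is the gradient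
    -- of the empirical risk
    (hgrad : ∀ (A : Finset (EuclideanSpace ℝ (Fin d))) (θ : EuclideanSpace ℝ (Fin p)),
      HasGradientAt (fun θ => (A.card : ℝ)⁻¹ * ∑ z ∈ A, ℓ θ z)
        ((A.card : ℝ)⁻¹ • ∑ z ∈ A, g θ z) θ)
    -- (A1) every empirical risk is μ-strongly convex
    (hA1 : ∀ (A : Finset (EuclideanSpace ℝ (Fin d))), A.Nonempty →
      ∀ θ θ' : EuclideanSpace ℝ (Fin p),
      (A.card : ℝ)⁻¹ * ∑ z ∈ A, ℓ θ z
          + ⟪(A.card : ℝ)⁻¹ • ∑ z ∈ A, g θ z, θ' - θ⟫ + μ / 2 * ‖θ' - θ‖ ^ 2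
        ≤ (A.card : ℝ)⁻¹ * ∑ z ∈ A, ℓ θ' z)
    -- (A2) the gradient is G-Lipschitz with respect to the data point
    (hA2 : ∀ θ z z', ‖g θ z - g θ z'‖ ≤ G * ‖z - z'‖)
    -- (A3) the target loss is K-Lipschitz in the parameters
    (hA3 : ∀ θ θ', |LT θ - LT θ'| ≤ K * ‖θ - θ'‖)
    (D D' : Finset (EuclideanSpace ℝ (Fin d))) (hD : D.Nonempty) (hD' : D'.Nonempty)
    (θD θD' : EuclideanSpace ℝ (Fin p))
    (hERM : ∀ θ, (D.card : ℝ)⁻¹ * ∑ z ∈ D, ℓ θD z ≤ (D.card : ℝ)⁻¹ * ∑ z ∈ D, ℓ θ z)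
    (hERM' : ∀ θ, (D'.card : ℝ)⁻¹ * ∑ z ∈ D', ℓ θD' z
      ≤ (D'.card : ℝ)⁻¹ * ∑ z ∈ D', ℓ θ z) :
    |LT θD - LT θD'| ≤ K * G / μ * W1 (empFinset D) (empFinset D') := by
  have hcrit : ∀ A θ₀,
      (∀ θ, (A.card : ℝ)⁻¹ * ∑ z ∈ A, ℓ θ₀ z ≤ (A.card : ℝ)⁻¹ * ∑ z ∈ A, ℓ θ z) →
      (A.card : ℝ)⁻¹ • ∑ z ∈ A, g θ₀ z = 0 := fun A θ₀ hmin =>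
    IsLocalMin.hasGradientAt_eq_zero (Filter.Eventually.of_forall hmin) (hgrad A θ₀)
  have hLip : LipschitzWith ⟨G, hG⟩ (g θD) := .of_dist_le_mul fun z z' => by
    rw [dist_eq_norm, dist_eq_norm]
    exact hA2 θD z z'
  have hgap : μ * ‖θD - θD'‖ ≤ ‖∫ z, g θD z ∂empFinset D' - ∫ z, g θD z ∂empFinset D‖ := by
    rw [integral_empFinset, integral_empFinset, hcrit D θD hERM, sub_zero]
    exact mul_norm_sub_le_norm_gradient_of_strongConvex (hA1 D' hD') (hcrit D' θD' hERM') θD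
  have hW := norm_integral_sub_le_mul_W1_empFinset hD hD' hLip
  calc |LT θD - LT θD'| ≤ K * ‖θD - θD'‖ := hA3 θD θD'
    _ ≤ K * (G * W1 (empFinset D) (empFinset D') / μ) := by
        gcongr
        rw [le_div_iff₀ hμ, mul_comm]
        exact hgap.trans hW
    _ = K * G / μ * W1 (empFinset D) (empFinset D') := by ring
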